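/- arXiv:1903.11887 — 2 statements merged into one kernel-verified Lean document; each statement's English description precedes it below -/
import Mathlib

section
/- For any bipartite density operator ρ_AB, Tr(ρ_AB²) ≥ (1/d_B)·Tr(ρ_A²) + (1/d_A)·Tr(ρ_B²) − 1/(d_A d_B), where ρ_A and ρ_B are the marginals. -/
open Matrix
open scoped ComplexOrder

/-- Partial trace over the second factor. -/
noncomputable def ptraceB {dA dB : ℕ} (ρ : Matrix (Fin dA × Fin dB) (Fin dA × Fin dB) ℂ) :
    Matrix (Fin dA) (Fin dA) ℂ := fun i j => ∑ k, ρ (i, k) (j, k)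

/-- Partial trace over the first factor. -/
noncomputable def ptraceA {dA dB : ℕ} (ρ : Matrix (Fin dA × Fin dB) (Fin dA × Fin dB) ℂ) :
    Matrix (Fin dB) (Fin dB) ℂ := fun i j => ∑ k, ρ (k, i) (k, j)

open scoped Kronecker

private lemma sum_rot {α : Type*} [AddCommMonoid α] {m n p : Type*}
    [Fintype m] [Fintype n] [Fintype p] (f : m → n → p → α) :
    ∑ y : p, ∑ x : m, ∑ z : n, f x z y = ∑ x : m, ∑ z : n, ∑ y : p, f x z y :=
  calc ∑ y : p, ∑ x : m, ∑ z : n, f x z y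
      = ∑ x : m, ∑ y : p, ∑ z : n, f x z y := Finset.sum_comm
    _ = ∑ x : m, ∑ z : n, ∑ y : p, f x z y :=
        Finset.sum_congr rfl fun _ _ => Finset.sum_comm

private lemma sum_swap {α : Type*} [AddCommMonoid α] {m n : Type*}
    [Fintype m] [Fintype n] (f : m → n → α) :
    ∑ y : n, ∑ x : m, f x y = ∑ x : m, ∑ y : n, f x y :=
  Finset.sum_comm

private lemma sum_swap23 {α : Type*} [AddCommMonoid α] {m n p : Type*}
    [Fintype m] [Fintype n] [Fintype p] (f : m → n → p → α) :
    ∑ x : m, ∑ y : n, ∑ z : p, f x y z = ∑ x : m, ∑ z : p, ∑ y : n, f x y z :=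
  Finset.sum_congr rfl fun _ _ => Finset.sum_comm

private lemma trace_mul_kronB {dA dB : ℕ} (ρ : Matrix (Fin dA × Fin dB) (Fin dA × Fin dB) ℂ)
    (X : Matrix (Fin dA) (Fin dA) ℂ) :
    (ρ * (X ⊗ₖ (1 : Matrix (Fin dB) (Fin dB) ℂ))).trace = (ptraceB ρ * X).trace := by
  simp only [Matrix.trace, Matrix.diag, Matrix.mul_apply, Matrix.kroneckerMap_apply,
    Matrix.one_apply, Fintype.sum_prod_type, mul_ite, mul_one, mul_zero,
    Finset.sum_ite_eq', Finset.mem_univ, if_true, ptraceB, Finset.sum_mul]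
  exact sum_swap23 fun x y z => ρ (x, y) (z, y) * X z x

private lemma trace_mul_kronA {dA dB : ℕ} (ρ : Matrix (Fin dA × Fin dB) (Fin dA × Fin dB) ℂ)
    (Y : Matrix (Fin dB) (Fin dB) ℂ) :
    (ρ * ((1 : Matrix (Fin dA) (Fin dA) ℂ) ⊗ₖ Y)).trace = (ptraceA ρ * Y).trace := by
  simp only [Matrix.trace, Matrix.diag, Matrix.mul_apply, Matrix.kroneckerMap_apply,
    Matrix.one_apply, Fintype.sum_prod_type, ite_mul, one_mul, zero_mul, mul_ite, mul_zero,
    Finset.sum_ite_irrel, Finset.sum_const_zero,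
    Finset.sum_ite_eq', Finset.mem_univ, if_true, ptraceA, Finset.sum_mul]
  exact sum_rot fun y z a => ρ (a, y) (a, z) * Y z y

private lemma trace_ptraceB {dA dB : ℕ} (ρ : Matrix (Fin dA × Fin dB) (Fin dA × Fin dB) ℂ) :
    (ptraceB ρ).trace = ρ.trace := by
  simp [ptraceB, Matrix.trace, Matrix.diag, Fintype.sum_prod_type]

private lemma trace_ptraceA {dA dB : ℕ} (ρ : Matrix (Fin dA × Fin dB) (Fin dA × Fin dB) ℂ) :
    (ptraceA ρ).trace = ρ.trace := by
  simp only [ptraceA, Matrix.trace, Matrix.diag, Fintype.sum_prod_type]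
  exact sum_swap fun x y => ρ (x, y) (x, y)

private lemma kron_conjTranspose {dA dB : ℕ} (X : Matrix (Fin dA) (Fin dA) ℂ)
    (Y : Matrix (Fin dB) (Fin dB) ℂ) : (X ⊗ₖ Y)ᴴ = Xᴴ ⊗ₖ Yᴴ := by
  ext ⟨i, k⟩ ⟨j, l⟩
  simp [Matrix.conjTranspose_apply, Matrix.kroneckerMap_apply, star_mul', mul_comm]

private lemma ptraceB_hermitian {dA dB : ℕ} {ρ : Matrix (Fin dA × Fin dB) (Fin dA × Fin dB) ℂ}
    (hρ : ρ.IsHermitian) : (ptraceB ρ).IsHermitian := by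
  ext i j
  simp only [Matrix.conjTranspose_apply, ptraceB, star_sum]
  exact Finset.sum_congr rfl fun k _ => hρ.apply (i, k) (j, k)

private lemma ptraceA_hermitian {dA dB : ℕ} {ρ : Matrix (Fin dA × Fin dB) (Fin dA × Fin dB) ℂ}
    (hρ : ρ.IsHermitian) : (ptraceA ρ).IsHermitian := by
  ext i j
  simp only [Matrix.conjTranspose_apply, ptraceA, star_sum]
  exact Finset.sum_congr rfl fun k _ => hρ.apply (k, i) (k, j)

/-- Purity form of inhomogeneous subadditivity:
`Tr(ρ_AB²) ≥ Tr(ρ_A²)/d_B + Tr(ρ_B²)/d_A - 1/(d_A d_B)`. -/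
theorem purity_inhomogeneous_subadditivity (dA dB : ℕ) (hA : 2 ≤ dA) (hB : 2 ≤ dB)
    (ρ : Matrix (Fin dA × Fin dB) (Fin dA × Fin dB) ℂ)
    (hρ : ρ.PosSemidef) (hρtr : ρ.trace = 1) :
    ((ρ * ρ).trace).re ≥
      (1 / dB) * ((ptraceB ρ * ptraceB ρ).trace).re
      + (1 / dA) * ((ptraceA ρ * ptraceA ρ).trace).re
      - 1 / (dA * dB) := by
  have hdA0 : ((dA : ℂ)) ≠ 0 := by
    exact_mod_cast Nat.cast_ne_zero.mpr (by omega)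
  have hdB0 : ((dB : ℂ)) ≠ 0 := by
    exact_mod_cast Nat.cast_ne_zero.mpr (by omega)
  set A := ptraceB ρ with hAdef
  set B := ptraceA ρ with hBdef
  set KA : Matrix (Fin dA × Fin dB) (Fin dA × Fin dB) ℂ :=
    A ⊗ₖ (1 : Matrix (Fin dB) (Fin dB) ℂ) with hKAdef
  set KB : Matrix (Fin dA × Fin dB) (Fin dA × Fin dB) ℂ :=
    (1 : Matrix (Fin dA) (Fin dA) ℂ) ⊗ₖ B with hKBdef
  set M : Matrix (Fin dA × Fin dB) (Fin dA × Fin dB) ℂ :=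
    ρ - (dB : ℂ)⁻¹ • KA - (dA : ℂ)⁻¹ • KB
      + ((dA : ℂ) * (dB : ℂ))⁻¹ • (1 : Matrix (Fin dA × Fin dB) (Fin dA × Fin dB) ℂ) with hMdef
  -- trace facts
  have htrA : A.trace = 1 := by rw [hAdef, trace_ptraceB, hρtr]
  have htrB : B.trace = 1 := by rw [hBdef, trace_ptraceA, hρtr]
  have h1 : (ρ * KA).trace = (A * A).trace := trace_mul_kronB ρ A
  have h2 : (ρ * KB).trace = (B * B).trace := trace_mul_kronA ρ B
  have h1' : (KA * ρ).trace = (A * A).trace := by rw [Matrix.trace_mul_comm, h1]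
  have h2' : (KB * ρ).trace = (B * B).trace := by rw [Matrix.trace_mul_comm, h2]
  have hKAKA : (KA * KA).trace = (dB : ℂ) * (A * A).trace := by
    rw [hKAdef, ← Matrix.mul_kronecker_mul, Matrix.trace_kronecker]
    simp [mul_comm]
  have hKBKB : (KB * KB).trace = (dA : ℂ) * (B * B).trace := by
    rw [hKBdef, ← Matrix.mul_kronecker_mul, Matrix.trace_kronecker]
    simp
  have hKAKB : (KA * KB).trace = 1 := by
    rw [hKAdef, hKBdef, ← Matrix.mul_kronecker_mul, Matrix.trace_kronecker]
    simp [htrA, htrB]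
  have hKBKA : (KB * KA).trace = 1 := by rw [Matrix.trace_mul_comm, hKAKB]
  have htrKA : KA.trace = (dB : ℂ) := by
    rw [hKAdef, Matrix.trace_kronecker, Matrix.trace_one, htrA, one_mul]
    simp
  have htrKB : KB.trace = (dA : ℂ) := by
    rw [hKBdef, Matrix.trace_kronecker, Matrix.trace_one, htrB, mul_one]
    simp
  have htrOne : (1 : Matrix (Fin dA × Fin dB) (Fin dA × Fin dB) ℂ).trace = (dA : ℂ) * (dB : ℂ) := by
    rw [Matrix.trace_one]
    simp [Fintype.card_prod]
  -- key algebraic identity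
  have key : (M * M).trace
      = (ρ * ρ).trace - (dB : ℂ)⁻¹ * (A * A).trace - (dA : ℂ)⁻¹ * (B * B).trace
        + ((dA : ℂ) * (dB : ℂ))⁻¹ := by
    simp only [hMdef, sub_mul, mul_sub, add_mul, mul_add, Matrix.smul_mul, Matrix.mul_smul,
      smul_smul, Matrix.one_mul, Matrix.mul_one, Matrix.trace_sub, Matrix.trace_add,
      Matrix.trace_smul, smul_eq_mul]
    rw [h1, h2, h1', h2', hKAKA, hKBKB, hKAKB, hKBKA, htrKA, htrKB, htrOne, hρtr]
    field_simp
    ring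
  -- Hermiticity of M
  have hAH : Aᴴ = A := ptraceB_hermitian hρ.1
  have hBH : Bᴴ = B := ptraceA_hermitian hρ.1
  have hMH : Mᴴ = M := by
    rw [hMdef]
    rw [Matrix.conjTranspose_add, Matrix.conjTranspose_sub, Matrix.conjTranspose_sub,
      Matrix.conjTranspose_smul, Matrix.conjTranspose_smul, Matrix.conjTranspose_smul,
      Matrix.conjTranspose_one, hρ.1.eq, hKAdef, hKBdef, kron_conjTranspose,
      kron_conjTranspose, Matrix.conjTranspose_one, hAH, hBH]
    norm_num [Complex.star_def, map_inv₀, _root_.map_mul]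
  -- positivity
  have hpos : 0 ≤ ((M * M).trace).re := by
    have h := hMH
    calc (0 : ℝ) ≤ ((Mᴴ * M).trace).re := by
          simp only [Matrix.trace, Matrix.diag, Matrix.mul_apply, Matrix.conjTranspose_apply]
          rw [Complex.re_sum]
          refine Finset.sum_nonneg fun q _ => ?_
          rw [Complex.re_sum]
          refine Finset.sum_nonneg fun p _ => ?_
          have : (star (M p q) * M p q).re = Complex.normSq (M p q) := by
            rw [Complex.star_def, ← Complex.normSq_eq_conj_mul_self, Complex.ofReal_re]
          rw [this]
          exact Complex.normSq_nonneg _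
      _ = ((M * M).trace).re := by rw [hMH]
  -- take real parts
  have cB : ((dB : ℂ))⁻¹ = (((dB : ℝ)⁻¹ : ℝ) : ℂ) := by push_cast; ring
  have cA : ((dA : ℂ))⁻¹ = (((dA : ℝ)⁻¹ : ℝ) : ℂ) := by push_cast; ring
  have cAB : ((dA : ℂ) * (dB : ℂ))⁻¹ = ((((dA : ℝ) * (dB : ℝ))⁻¹ : ℝ) : ℂ) := by
    push_cast; ring
  rw [cB, cA, cAB] at key
  have kre := congrArg Complex.re key
  simp only [Complex.sub_re, Complex.add_re, Complex.mul_re, Complex.ofReal_re,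
    Complex.ofReal_im, zero_mul, sub_zero] at kre
  rw [kre] at hpos
  rw [ge_iff_le, one_div, one_div, one_div]
  linarith
end

section
/- Let ρ_AB be a bipartite density operator such that ‖C_{AB}‖_q is computed in a basis where each local Bloch vector is supported on a single basis element. Then for every q ≥ 1: ‖C_{AB}‖_q ≥ √(d_B−1)·‖C_A‖_q + √(d_A−1)·‖C_B‖_q − √(d_A−1)·√(d_B−1). -/
/-!
The operators `√(d_A-1)·𝟙 ∓ X_{i₁}` and `√(d_B-1)·𝟙 ∓ Y_{j₁}` are positive semidefinite: a
traceless Hermitian `Z` with `Tr Z² = d` has all eigenvalues of modulus at most `√(d-1)`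
(Cauchy–Schwarz on the remaining `d-1` eigenvalues). The tensor product of the two is again
positive semidefinite, so its expectation in `ρ` is nonnegative; expanding it and choosing the
signs to match those of the local Bloch components gives
`|⟨X_{i₁}⊗Y_{j₁}⟩| ≥ √(d_B-1)|⟨X_{i₁}⊗𝟙⟩| + √(d_A-1)|⟨𝟙⊗Y_{j₁}⟩| - √(d_A-1)√(d_B-1)`.
Since the local Bloch vectors have a single nonzero component, their `q`-norms are these moduli,
while the `q`-norm of the correlation tensor dominates each of its entries.
-/

open Matrix
open scoped ComplexOrder Kronecker

theorem mul_sq_le_of_sum_eq_zero {ι : Type*} [Fintype ι] [DecidableEq ι] {v : ι → ℝ}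
    (hv : ∑ i, v i = 0) (k : ι) :
    Fintype.card ι * v k ^ 2 ≤ (Fintype.card ι - 1) * ∑ i, v i ^ 2 := by
  have : Nonempty ι := ⟨k⟩
  have hrest : ∑ i ∈ Finset.univ.erase k, v i = -v k := by
    linarith [Finset.sum_erase_add Finset.univ v (Finset.mem_univ k)]
  have hrest_sq : ∑ i ∈ Finset.univ.erase k, v i ^ 2 = ∑ i, v i ^ 2 - v k ^ 2 := by
    linarith [Finset.sum_erase_add Finset.univ (v · ^ 2) (Finset.mem_univ k)]
  have hcard : ((Finset.univ.erase k).card : ℝ) = Fintype.card ι - 1 := by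
    rw [Finset.card_erase_of_mem (Finset.mem_univ k), Finset.card_univ,
      Nat.cast_sub Fintype.card_pos, Nat.cast_one]
  have hCS := sq_sum_le_card_mul_sum_sq (s := Finset.univ.erase k) (f := v)
  rw [hrest, hrest_sq, hcard, neg_sq] at hCS
  linarith

namespace Real

variable {ι : Type*} {q : ℝ}

theorem le_sum_sum_rpow_rpow_one_div {κ : Type*} [Fintype ι] [Fintype κ] {f : ι → κ → ℝ}
    (hf : ∀ i j, 0 ≤ f i j) (hq : 0 < q) (i : ι) (j : κ) :
    f i j ≤ (∑ i, ∑ j, f i j ^ q) ^ (1 / q) := by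
  have hterm : ∀ i j, 0 ≤ f i j ^ q := fun i j => rpow_nonneg (hf i j) q
  have hrow : ∀ i, 0 ≤ ∑ j, f i j ^ q := fun i => Finset.sum_nonneg fun j _ => hterm i j
  rw [one_div, le_rpow_inv_iff_of_pos (hf i j) (Finset.sum_nonneg fun i _ => hrow i) hq]
  calc f i j ^ q ≤ ∑ j, f i j ^ q := Finset.single_le_sum (fun j _ => hterm i j) (Finset.mem_univ j)
    _ ≤ ∑ i, ∑ j, f i j ^ q := Finset.single_le_sum (fun i _ => hrow i) (Finset.mem_univ i)

theorem sum_rpow_rpow_one_div_eq_single [Fintype ι] {f : ι → ℝ} (k : ι) (hf : ∀ i, i ≠ k → f i = 0)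
    (hk : 0 ≤ f k) (hq : q ≠ 0) : (∑ i, f i ^ q) ^ (1 / q) = f k := by
  rw [Finset.sum_eq_single k (fun i _ hi => by rw [hf i hi, zero_rpow hq]) (by simp), one_div,
    rpow_rpow_inv hk hq]

end Real

namespace Matrix

lemma smul_one_sub_kronecker_smul_one_sub {R α m n : Type*} [CommRing R] [CommRing α]
    [Algebra R α] [Fintype m] [DecidableEq m] [Fintype n] [DecidableEq n]
    (a b : R) (A : Matrix m m α) (B : Matrix n n α) :
    (a • 1 - A) ⊗ₖ (b • 1 - B) = (a * b) • 1 - a • (1 ⊗ₖ B) - b • (A ⊗ₖ 1) + A ⊗ₖ B := by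
  simp only [sub_eq_add_neg, ← neg_one_smul α A, ← neg_one_smul α B, add_kronecker, kronecker_add,
    smul_kronecker, kronecker_smul, one_kronecker_one]
  module

lemma IsHermitian.kronecker {α m n : Type*} [CommRing α] [StarRing α] {A : Matrix m m α}
    {B : Matrix n n α} (hA : A.IsHermitian) (hB : B.IsHermitian) : (A ⊗ₖ B).IsHermitian := by
  rw [IsHermitian, conjTranspose_kronecker, hA.eq, hB.eq]

lemma IsHermitian.im_trace_mul_eq_zero {n : Type*} [Fintype n] {A B : Matrix n n ℂ}
    (hA : A.IsHermitian) (hB : B.IsHermitian) : (A * B).trace.im = 0 := by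
  refine Complex.conj_eq_iff_im.mp ?_
  change star _ = _
  rw [← trace_conjTranspose, conjTranspose_mul, hA.eq, hB.eq, trace_mul_comm]

variable {n 𝕜 : Type*} [Fintype n] [DecidableEq n] [RCLike 𝕜] {A : Matrix n n 𝕜}

lemma IsHermitian.trace_cfc (hA : A.IsHermitian) (f : ℝ → ℝ) :
    (cfc f A).trace = ∑ i, (f (hA.eigenvalues i) : 𝕜) := by
  rw [hA.cfc_eq, IsHermitian.cfc, Unitary.conjStarAlgAut_apply, trace_mul_cycle,
    Unitary.coe_star_mul_self, one_mul, trace_diagonal]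
  rfl

lemma IsHermitian.trace_mul_self (hA : A.IsHermitian) :
    (A * A).trace = ∑ i, ((hA.eigenvalues i ^ 2 : ℝ) : 𝕜) := by
  rw [← sq, ← cfc_pow_id (R := ℝ) A 2 hA.isSelfAdjoint]
  exact hA.trace_cfc _

lemma IsHermitian.abs_eigenvalues_le (hA : A.IsHermitian) (h0 : A.trace = 0)
    (h2 : (A * A).trace = Fintype.card n) (i : n) :
    |hA.eigenvalues i| ≤ √(Fintype.card n - 1) := by
  have hsum : ∑ j, hA.eigenvalues j = 0 := by
    exact_mod_cast hA.trace_eq_sum_eigenvalues.symm.trans h0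
  have hsum_sq : ∑ j, hA.eigenvalues j ^ 2 = Fintype.card n := by
    exact_mod_cast hA.trace_mul_self.symm.trans h2
  have hcard : (0 : ℝ) < Fintype.card n := by exact_mod_cast Fintype.card_pos_iff.mpr ⟨i⟩
  have h := mul_sq_le_of_sum_eq_zero hsum i
  rw [hsum_sq, mul_comm _ (Fintype.card n : ℝ)] at h
  rw [← Real.sqrt_sq_eq_abs]
  exact Real.sqrt_le_sqrt (le_of_mul_le_mul_left h hcard)

open scoped MatrixOrder in
lemma IsHermitian.posSemidef_smul_one_sub_smul (hA : A.IsHermitian) {c s : ℝ}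
    (hc : ∀ i, |hA.eigenvalues i| ≤ c) (hs : |s| ≤ 1) : (c • 1 - s • A).PosSemidef := by
  have hcfc : c • 1 - s • A = cfc (fun x => c - s * x) A := by
    rw [cfc_sub _ _ A, cfc_const c A, cfc_const_mul_id s A, Algebra.algebraMap_eq_smul_one]
  rw [← nonneg_iff_posSemidef, hcfc]
  refine cfc_nonneg fun x hx => ?_
  obtain ⟨i, rfl⟩ := hA.spectrum_real_eq_range_eigenvalues ▸ hx
  have : s * hA.eigenvalues i ≤ c := calc
    _ ≤ |s| * |hA.eigenvalues i| := (le_abs_self _).trans (abs_mul _ _).le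
    _ ≤ 1 * c := mul_le_mul hs (hc i) (abs_nonneg _) zero_le_one
    _ = c := one_mul c
  linarith

open scoped MatrixOrder in
lemma PosSemidef.trace_mul_nonneg {B : Matrix n n 𝕜} (hA : A.PosSemidef) (hB : B.PosSemidef) :
    0 ≤ (A * B).trace := by
  set R := CFC.sqrt A
  have hR : Rᴴ = R := (CFC.sqrt_nonneg A).posSemidef.isHermitian.eq
  calc (0 : 𝕜) ≤ (R * B * R).trace := by
        simpa [hR] using (hB.conjTranspose_mul_mul_same R).trace_nonneg
    _ = (A * B).trace := by
        rw [trace_mul_cycle, ← CFC.sqrt_mul_sqrt_self A hA.nonneg]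

end Matrix

theorem norm_trace_mul_kronecker_ge {m n : Type*} [Fintype m] [DecidableEq m] [Fintype n]
    [DecidableEq n] {ρ : Matrix (m × n) (m × n) ℂ} (hρ : ρ.PosSemidef) (hρtr : ρ.trace = 1)
    {A : Matrix m m ℂ} {B : Matrix n n ℂ} (hA : A.IsHermitian) (hB : B.IsHermitian) {cA cB : ℝ}
    (hcA : ∀ i, |hA.eigenvalues i| ≤ cA) (hcB : ∀ j, |hB.eigenvalues j| ≤ cB) :
    cB * ‖(ρ * (A ⊗ₖ 1)).trace‖ + cA * ‖(ρ * (1 ⊗ₖ B)).trace‖ - cA * cB ≤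
      ‖(ρ * (A ⊗ₖ B)).trace‖ := by
  set a := (ρ * (A ⊗ₖ 1)).trace
  set b := (ρ * (1 ⊗ₖ B)).trace
  set t := (ρ * (A ⊗ₖ B)).trace
  have hexpect : ∀ s u : ℝ, |s| ≤ 1 → |u| ≤ 1 →
      0 ≤ cA * cB - cA * u * b.re - cB * s * a.re + s * u * t.re := by
    intro s u hs hu
    have hM := (hA.posSemidef_smul_one_sub_smul hcA hs).kronecker
      (hB.posSemidef_smul_one_sub_smul hcB hu)
    have h := (Complex.nonneg_iff.mp (hρ.trace_mul_nonneg hM)).1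
    simp only [smul_one_sub_kronecker_smul_one_sub, kronecker_smul, smul_kronecker, Matrix.mul_add,
      Matrix.mul_sub, Matrix.mul_smul, Matrix.mul_one, trace_add, trace_sub, trace_smul, hρtr,
      Complex.add_re, Complex.sub_re, Complex.smul_re, Complex.one_re, smul_eq_mul] at h
    linarith
  have hsign : ∀ x : ℝ, ∃ s : ℝ, |s| ≤ 1 ∧ s * x = |x| := fun x => by
    rcases abs_cases x with ⟨hx, -⟩ | ⟨hx, -⟩
    · exact ⟨1, by simp, by rw [hx, one_mul]⟩
    · exact ⟨-1, by simp, by rw [hx, neg_one_mul]⟩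
  obtain ⟨s, hs, hsa⟩ := hsign a.re
  obtain ⟨u, hu, hub⟩ := hsign b.re
  have ha : ‖a‖ = |a.re| :=
    (Complex.abs_re_eq_norm.mpr (hρ.isHermitian.im_trace_mul_eq_zero
      (hA.kronecker isHermitian_one))).symm
  have hb : ‖b‖ = |b.re| :=
    (Complex.abs_re_eq_norm.mpr (hρ.isHermitian.im_trace_mul_eq_zero
      (isHermitian_one.kronecker hB))).symm
  have ht : s * u * t.re ≤ ‖t‖ := calc
    s * u * t.re ≤ |s| * |u| * |t.re| := by
      rw [← abs_mul, ← abs_mul]; exact le_abs_self _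
    _ ≤ 1 * 1 * ‖t‖ := by gcongr; exact Complex.abs_re_le_norm t
    _ = ‖t‖ := by ring
  have := hexpect s u hs hu
  rw [ha, hb, ← hsa, ← hub]
  linarith

theorem correlation_tensor_qnorm_bound_general (dA dB : ℕ)
    (ρ : Matrix (Fin dA × Fin dB) (Fin dA × Fin dB) ℂ)
    (hρ : ρ.PosSemidef) (hρtr : ρ.trace = 1)
    (X : Fin (dA ^ 2 - 1) → Matrix (Fin dA) (Fin dA) ℂ)
    (Y : Fin (dB ^ 2 - 1) → Matrix (Fin dB) (Fin dB) ℂ)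
    (hXh : ∀ i, (X i).IsHermitian) (hX0 : ∀ i, (X i).trace = 0)
    (hXorth : ∀ i j, (X i * X j).trace = if i = j then (dA : ℂ) else 0)
    (hYh : ∀ j, (Y j).IsHermitian) (hY0 : ∀ j, (Y j).trace = 0)
    (hYorth : ∀ i j, (Y i * Y j).trace = if i = j then (dB : ℂ) else 0)
    (i1 : Fin (dA ^ 2 - 1)) (j1 : Fin (dB ^ 2 - 1))
    (hXsupp : ∀ i, i ≠ i1 → (ρ * (X i ⊗ₖ (1 : Matrix (Fin dB) (Fin dB) ℂ))).trace = 0)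
    (hYsupp : ∀ j, j ≠ j1 → (ρ * ((1 : Matrix (Fin dA) (Fin dA) ℂ) ⊗ₖ Y j)).trace = 0)
    (q : ℝ) (hq : 1 ≤ q) :
    (∑ i, ∑ j, ‖(ρ * (X i ⊗ₖ Y j)).trace‖ ^ q) ^ (1 / q) ≥
      Real.sqrt ((dB : ℝ) - 1) *
        (∑ i, ‖(ρ * (X i ⊗ₖ (1 : Matrix (Fin dB) (Fin dB) ℂ))).trace‖ ^ q) ^ (1 / q)
      + Real.sqrt ((dA : ℝ) - 1) *
        (∑ j, ‖(ρ * ((1 : Matrix (Fin dA) (Fin dA) ℂ) ⊗ₖ Y j)).trace‖ ^ q) ^ (1 / q)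
      - Real.sqrt ((dA : ℝ) - 1) * Real.sqrt ((dB : ℝ) - 1) := by
  have hq0 : 0 < q := by linarith
  have hXbound := (hXh i1).abs_eigenvalues_le (hX0 i1)
    (by rw [hXorth, if_pos rfl, Fintype.card_fin])
  have hYbound := (hYh j1).abs_eigenvalues_le (hY0 j1)
    (by rw [hYorth, if_pos rfl, Fintype.card_fin])
  simp only [Fintype.card_fin] at hXbound hYbound
  have hlocal := norm_trace_mul_kronecker_ge hρ hρtr (hXh i1) (hYh j1) hXbound hYbound
  have hcorr := Real.le_sum_sum_rpow_rpow_one_div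
    (f := fun i j => ‖(ρ * (X i ⊗ₖ Y j)).trace‖) (fun _ _ => norm_nonneg _) hq0 i1 j1
  have hmargA : (∑ i, ‖(ρ * (X i ⊗ₖ 1)).trace‖ ^ q) ^ (1 / q) = ‖(ρ * (X i1 ⊗ₖ 1)).trace‖ :=
    Real.sum_rpow_rpow_one_div_eq_single i1 (fun i hi => by rw [hXsupp i hi, norm_zero])
      (norm_nonneg _) hq0.ne'
  have hmargB : (∑ j, ‖(ρ * (1 ⊗ₖ Y j)).trace‖ ^ q) ^ (1 / q) = ‖(ρ * (1 ⊗ₖ Y j1)).trace‖ :=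
    Real.sum_rpow_rpow_one_div_eq_single j1 (fun j hj => by rw [hYsupp j hj, norm_zero])
      (norm_nonneg _) hq0.ne'
  rw [hmargA, hmargB]
  linarith

/-- If the local operator bases are chosen so that each local Bloch vector
is supported on a single basis element (`X i1` resp. `Y j1`), then for every `q ≥ 1`:
`‖C_AB‖_q ≥ √(d_B-1)‖C_A‖_q + √(d_A-1)‖C_B‖_q - √(d_A-1)√(d_B-1)`. -/
theorem correlation_tensor_qnorm_bound (dA dB : ℕ) (hA : 2 ≤ dA) (hB : 2 ≤ dB)
    (ρ : Matrix (Fin dA × Fin dB) (Fin dA × Fin dB) ℂ)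
    (hρ : ρ.PosSemidef) (hρtr : ρ.trace = 1)
    (X : Fin (dA ^ 2 - 1) → Matrix (Fin dA) (Fin dA) ℂ)
    (Y : Fin (dB ^ 2 - 1) → Matrix (Fin dB) (Fin dB) ℂ)
    (hXh : ∀ i, (X i).IsHermitian) (hX0 : ∀ i, (X i).trace = 0)
    (hXorth : ∀ i j, (X i * X j).trace = if i = j then (dA : ℂ) else 0)
    (hYh : ∀ j, (Y j).IsHermitian) (hY0 : ∀ j, (Y j).trace = 0)
    (hYorth : ∀ i j, (Y i * Y j).trace = if i = j then (dB : ℂ) else 0)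
    (i1 : Fin (dA ^ 2 - 1)) (j1 : Fin (dB ^ 2 - 1))
    (hXsupp : ∀ i, i ≠ i1 → (ρ * (X i ⊗ₖ (1 : Matrix (Fin dB) (Fin dB) ℂ))).trace = 0)
    (hYsupp : ∀ j, j ≠ j1 → (ρ * ((1 : Matrix (Fin dA) (Fin dA) ℂ) ⊗ₖ Y j)).trace = 0)
    (q : ℝ) (hq : 1 ≤ q) :
    (∑ i, ∑ j, ‖(ρ * (X i ⊗ₖ Y j)).trace‖ ^ q) ^ (1 / q) ≥
      Real.sqrt ((dB : ℝ) - 1) *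
        (∑ i, ‖(ρ * (X i ⊗ₖ (1 : Matrix (Fin dB) (Fin dB) ℂ))).trace‖ ^ q) ^ (1 / q)
      + Real.sqrt ((dA : ℝ) - 1) *
        (∑ j, ‖(ρ * ((1 : Matrix (Fin dA) (Fin dA) ℂ) ⊗ₖ Y j)).trace‖ ^ q) ^ (1 / q)
      - Real.sqrt ((dA : ℝ) - 1) * Real.sqrt ((dB : ℝ) - 1) :=
  correlation_tensor_qnorm_bound_general dA dB ρ hρ hρtr X Y hXh hX0 hXorth hYh hY0 hYorth i1 j1
    hXsupp hYsupp q hq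
end
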